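/- arXiv:2406.04141 — 2 statements merged into one kernel-verified Lean document; each statement's English description precedes it below -/
import Mathlib

section
/- For the Coupon Collector Channel CC(n,k,R) with uniform input, the mutual information I(X;Y) equals log₂ C(n,k) − k^{-R} · Σ_{ℓ=1}^{min(k,R)} C(k,ℓ) · S(R,ℓ) · ℓ! · log₂ C(n-ℓ, k-ℓ). -/
/-!
Given the input `x`, the output `y` is uniform on the `k ^ R` words over `x`; given `y`, the
input is uniform on the `C(n - ℓ, k - ℓ)` many `k`-sets containing the `ℓ` distinct symbols of
`y`. Hence every term of `I(X;Y)` with `y` a word over `x` equals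
`(C(n,k) k^R)⁻¹ log₂ (C(n,k) / C(n-ℓ, k-ℓ))`, and it remains to count the words of length `R`
over a `k`-set with exactly `ℓ` distinct letters. There are `k (k-1) ⋯ (k-ℓ+1) S(R,ℓ)` of them,
as one sees by appending one letter at a time and comparing with the recursion of the Stirling
numbers.
-/

def stirling2 : ℕ → ℕ → ℕ
  | 0, 0 => 0 + 1
  | 0, _ + 1 => 0
  | _ + 1, 0 => 0
  | n + 1, k + 1 => (k + 1) * stirling2 n (k + 1) + stirling2 n k

open Finset

theorem stirling2_eq_stirlingSecond : ∀ n k, stirling2 n k = Nat.stirlingSecond n k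
  | 0, 0 | 0, _ + 1 | _ + 1, 0 => rfl
  | n + 1, k + 1 => by
    rw [stirling2, Nat.stirlingSecond_succ_succ, stirling2_eq_stirlingSecond n (k + 1),
      stirling2_eq_stirlingSecond n k]

theorem sum_descFactorial_mul_stirlingSecond_succ {M : Type*} [AddCommMonoid M] (m R : ℕ)
    (f : ℕ → M) :
    ∑ ℓ ∈ range (R + 2), (m.descFactorial ℓ * (R + 1).stirlingSecond ℓ) • f ℓ =
      ∑ ℓ ∈ range (R + 1),
        (m.descFactorial ℓ * R.stirlingSecond ℓ) • (ℓ • f ℓ + (m - ℓ) • f (ℓ + 1)) := by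
  have hrec : ∀ ℓ, m.descFactorial (ℓ + 1) * (R + 1).stirlingSecond (ℓ + 1) =
      m.descFactorial (ℓ + 1) * R.stirlingSecond (ℓ + 1) * (ℓ + 1) +
        m.descFactorial ℓ * R.stirlingSecond ℓ * (m - ℓ) := by
    intro ℓ
    rw [Nat.stirlingSecond_succ_succ, Nat.descFactorial_succ]
    ring
  have hshift : ∑ ℓ ∈ range (R + 1),
      (m.descFactorial (ℓ + 1) * R.stirlingSecond (ℓ + 1) * (ℓ + 1)) • f (ℓ + 1) =
        ∑ ℓ ∈ range (R + 1), (m.descFactorial ℓ * R.stirlingSecond ℓ * ℓ) • f ℓ := by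
    have h := sum_range_succ' (fun ℓ => (m.descFactorial ℓ * R.stirlingSecond ℓ * ℓ) • f ℓ) (R + 1)
    rw [sum_range_succ, Nat.stirlingSecond_eq_zero_of_lt R.lt_succ_self] at h
    simpa using h.symm
  rw [sum_range_succ', Nat.stirlingSecond_succ_zero, mul_zero, zero_smul, add_zero]
  simp only [hrec, add_smul, sum_add_distrib, hshift, smul_add, ← mul_smul]

section Words

variable {α M : Type*} [AddCommMonoid M]

theorem sum_piFinset_const_succ {R : ℕ} (t : Finset α) (F : (Fin (R + 1) → α) → M) :
    ∑ y ∈ Fintype.piFinset fun _ => t, F y =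
      ∑ v ∈ t, ∑ g ∈ Fintype.piFinset fun _ : Fin R => t, F (Fin.cons v g) := by
  rw [← sum_product', ← filter_true_of_mem (s := Fintype.piFinset fun _ => t) (p := fun _ => True)
    (by simp), filter_piFinset_eq_map_consEquiv _ (fun _ => True), filter_true, sum_map]
  rfl

variable [DecidableEq α]

theorem sum_ite_forall_mem [Fintype α] {R : ℕ} (t : Finset α) (g : (Fin R → α) → M) :
    ∑ y, (if ∀ i, y i ∈ t then g y else 0) = ∑ y ∈ Fintype.piFinset fun _ => t, g y := by
  rw [← sum_filter]
  congr 1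
  ext y
  simp

theorem image_cons_univ {R : ℕ} (v : α) (g : Fin R → α) :
    univ.image (Fin.cons v g : Fin (R + 1) → α) = insert v (univ.image g) := by
  ext a
  simp [Fin.exists_fin_succ, eq_comm]

theorem sum_card_insert {s t : Finset α} (hst : s ⊆ t) (f : ℕ → M) :
    ∑ v ∈ t, f #(insert v s) = #s • f #s + (#t - #s) • f (#s + 1) := by
  rw [← sum_sdiff hst, add_comm]
  congr 1
  · rw [Finset.sum_congr rfl fun v hv => by rw [insert_eq_of_mem hv], sum_const]
  · rw [Finset.sum_congr rfl fun v hv => by rw [card_insert_of_notMem (mem_sdiff.1 hv).2],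
      sum_const, card_sdiff_of_subset hst]

theorem sum_piFinset_card_image (t : Finset α) (f : ℕ → M) : ∀ R : ℕ,
    ∑ y ∈ Fintype.piFinset fun _ : Fin R => t, f #(univ.image y) =
      ∑ ℓ ∈ range (R + 1), ((#t).descFactorial ℓ * R.stirlingSecond ℓ) • f ℓ
  | 0 => by simp
  | R + 1 => by
    have hstep : ∀ g ∈ Fintype.piFinset fun _ : Fin R => t,
        ∑ v ∈ t, f #(univ.image (Fin.cons v g : Fin (R + 1) → α)) =
          #(univ.image g) • f #(univ.image g) +
            (#t - #(univ.image g)) • f (#(univ.image g) + 1) := by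
      intro g hg
      simp_rw [image_cons_univ]
      exact sum_card_insert (by simpa [image_subset_iff] using hg) f
    rw [sum_piFinset_const_succ, sum_comm, Finset.sum_congr rfl hstep,
      sum_piFinset_card_image t (fun ℓ => ℓ • f ℓ + (#t - ℓ) • f (ℓ + 1)) R,
      sum_descFactorial_mul_stirlingSecond_succ]

theorem card_filter_subtype_card_subset [Fintype α] (s : Finset α) {k : ℕ} (hs : #s ≤ k) :
    #{x : {x : Finset α // #x = k} | s ⊆ x.1} = (Fintype.card α - #s).choose (k - #s) := by
  have huniv : (univ : Finset {x : Finset α // #x = k}).map (Function.Embedding.subtype _) =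
      powersetCard k univ := by
    ext x
    simp [mem_powersetCard]
  rw [← card_univ, ← card_filter_powersetCard_subset s univ k (subset_univ s) hs, ← huniv,
    filter_map, card_map]
  rfl

end Words

section CouponCollector

open Real

variable {n k R : ℕ}

noncomputable def couponJoint (n k R : ℕ) (x : {x : Finset (Fin n) // x.card = k})
    (y : Fin R → Fin n) : ℝ :=
  (1 / (n.choose k : ℝ)) * (if ∀ i, y i ∈ x.1 then ((k : ℝ) ^ R)⁻¹ else 0)

theorem sum_couponJoint_output (hk : 0 < k) (x : {x : Finset (Fin n) // x.card = k}) :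
    ∑ y, couponJoint n k R x y = 1 / n.choose k := by
  simp only [couponJoint, ← mul_sum, sum_ite_forall_mem, sum_const, Fintype.card_piFinset_const,
    x.2, nsmul_eq_mul]
  push_cast
  field_simp

theorem sum_couponJoint_input (y : Fin R → Fin n) (hy : #(univ.image y) ≤ k) :
    ∑ x, couponJoint n k R x y =
      (n - #(univ.image y)).choose (k - #(univ.image y)) / (n.choose k * (k : ℝ) ^ R) := by
  have hmem : ∀ x : {x : Finset (Fin n) // x.card = k},
      (∀ i, y i ∈ x.1) ↔ univ.image y ⊆ x.1 := by
    simp [image_subset_iff]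
  simp only [couponJoint, ← mul_sum, hmem, ← sum_filter, sum_const,
    card_filter_subtype_card_subset _ hy, Fintype.card_fin, nsmul_eq_mul]
  field_simp

theorem couponJoint_mul_logb (hk : 0 < k) (hkn : k ≤ n) (x : {x : Finset (Fin n) // x.card = k})
    (y : Fin R → Fin n) :
    couponJoint n k R x y * logb 2 (couponJoint n k R x y /
        ((∑ y', couponJoint n k R x y') * ∑ x', couponJoint n k R x' y)) =
      if ∀ i, y i ∈ x.1 then
        (n.choose k * (k : ℝ) ^ R)⁻¹ *
          (logb 2 (n.choose k) - logb 2 ((n - #(univ.image y)).choose (k - #(univ.image y))))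
      else 0 := by
  split_ifs with hyx
  · have hy : #(univ.image y) ≤ k := x.2 ▸ card_le_card (by simpa [image_subset_iff] using hyx)
    have hC : (0 : ℝ) < n.choose k := by exact_mod_cast Nat.choose_pos hkn
    have hN : (0 : ℝ) < (n - #(univ.image y)).choose (k - #(univ.image y)) := by
      exact_mod_cast Nat.choose_pos (by omega)
    rw [sum_couponJoint_output hk, sum_couponJoint_input y hy, ← logb_div hC.ne' hN.ne']
    simp only [couponJoint, if_pos hyx]
    congr 2 <;> field_simp
  · simp [couponJoint, hyx]

theorem sum_couponJoint_mul_logb (hk : 0 < k) (hkn : k ≤ n)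
    (x : {x : Finset (Fin n) // x.card = k}) :
    ∑ y, couponJoint n k R x y * logb 2 (couponJoint n k R x y /
        ((∑ y', couponJoint n k R x y') * ∑ x', couponJoint n k R x' y)) =
      (n.choose k * (k : ℝ) ^ R)⁻¹ * ((k : ℝ) ^ R * logb 2 (n.choose k) -
        ∑ ℓ ∈ range (R + 1), (k.descFactorial ℓ * R.stirlingSecond ℓ : ℕ) •
          logb 2 ((n - ℓ).choose (k - ℓ))) := by
  simp only [couponJoint_mul_logb hk hkn x, sum_ite_forall_mem, ← mul_sum, sum_sub_distrib,
    sum_const, Fintype.card_piFinset_const, x.2, nsmul_eq_mul, Nat.cast_pow,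
    sum_piFinset_card_image x.1 (fun ℓ => logb 2 ((n - ℓ).choose (k - ℓ) : ℝ))]

theorem sum_range_descFactorial_mul_stirlingSecond (hR : 0 < R) (f : ℕ → ℝ) :
    ∑ ℓ ∈ range (R + 1), (k.descFactorial ℓ * R.stirlingSecond ℓ : ℕ) • f ℓ =
      ∑ ℓ ∈ Icc 1 (min k R), (k.choose ℓ * R.stirlingSecond ℓ * ℓ.factorial : ℝ) * f ℓ := by
  have hvanish : ∀ ℓ ∈ range (R + 1), ℓ ∉ Icc 1 (min k R) →
      (k.descFactorial ℓ * R.stirlingSecond ℓ : ℕ) • f ℓ = 0 := by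
    intro ℓ hℓR hℓ
    rcases Nat.eq_zero_or_pos ℓ with rfl | hℓ0
    · obtain ⟨R, rfl⟩ := Nat.exists_eq_add_of_lt hR
      simp
    · have hkℓ : k < ℓ := by simp at hℓR hℓ; omega
      simp [Nat.descFactorial_eq_zero_iff_lt.2 hkℓ]
  rw [← sum_subset (fun ℓ hℓ => by simp at hℓ ⊢; omega) hvanish]
  refine sum_congr rfl fun ℓ _ => ?_
  rw [nsmul_eq_mul, Nat.descFactorial_eq_factorial_mul_choose]
  push_cast
  ring

end CouponCollector

/-- Mutual information `I(X;Y)` of the Coupon Collector Channel `CC(n,k,R)` with uniform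
input equals `log₂ C(n,k) - k^(-R) · Σ_ℓ C(k,ℓ)·S(R,ℓ)·ℓ!·log₂ C(n-ℓ,k-ℓ)`. -/
theorem stmt6 (n k R : ℕ) (hk : 0 < k) (hkn : k < n) (hR : 0 < R)
    (joint : {x : Finset (Fin n) // x.card = k} → (Fin R → Fin n) → ℝ)
    (hjoint : ∀ x y, joint x y =
      (1 / (n.choose k : ℝ)) * (if ∀ i, y i ∈ x.1 then ((k : ℝ) ^ R)⁻¹ else 0)) :
    (∑ x : {x : Finset (Fin n) // x.card = k}, ∑ y : Fin R → Fin n,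
        joint x y * Real.logb 2 (joint x y /
          ((∑ y' : Fin R → Fin n, joint x y') *
            ∑ x' : {x : Finset (Fin n) // x.card = k}, joint x' y)))
      = Real.logb 2 (n.choose k) -
          ((k : ℝ) ^ R)⁻¹ *
            ∑ ℓ ∈ Finset.Icc 1 (min k R),
              (k.choose ℓ * stirling2 R ℓ * ℓ.factorial : ℝ) *
                Real.logb 2 (((n - ℓ).choose (k - ℓ) : ℝ)) := by
  obtain rfl : joint = couponJoint n k R := funext₂ hjoint
  have hC : (n.choose k : ℝ) ≠ 0 := by exact_mod_cast (Nat.choose_pos hkn.le).ne'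
  simp only [stirling2_eq_stirlingSecond]
  rw [Finset.sum_congr rfl fun x _ => sum_couponJoint_mul_logb hk hkn.le x,
    sum_range_descFactorial_mul_stirlingSecond hR, sum_const, card_univ, Fintype.card_finset_len,
    Fintype.card_fin, nsmul_eq_mul]
  field_simp
end

section
/- For all n, k, R with 0 < k < n and R ≥ 1, the capacity of the Coupon Collector Channel is at least that of its erasure version: log₂ C(n,k) − k^{-R} Σ_{ℓ=1}^{min(k,R)} C(k,ℓ) S(R,ℓ) ℓ! log₂ C(n-ℓ,k-ℓ) ≥ log₂ C(n,k) · S(R,k) · k! · k^{-R}. -/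
open Finset Nat

theorem stirling2_eq_stirlingSecond_s10 : stirling2 = stirlingSecond := by
  funext R k
  induction R generalizing k with
  | zero => cases k <;> rfl
  | succ R ih =>
    cases k with
    | zero => rfl
    | succ k => rw [stirling2, stirlingSecond_succ_succ, ih, ih]

theorem Nat.mul_descFactorial (k ℓ : ℕ) :
    k * k.descFactorial ℓ = k.descFactorial (ℓ + 1) + ℓ * k.descFactorial ℓ := by
  rcases le_or_gt ℓ k with h | h
  · rw [descFactorial_succ, ← add_mul, Nat.sub_add_cancel h]
  · simp [descFactorial_eq_zero_iff_lt.mpr h]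

theorem Nat.sum_stirlingSecond_mul_descFactorial (k R : ℕ) :
    ∑ ℓ ∈ range (R + 1), stirlingSecond R ℓ * k.descFactorial ℓ = k ^ R := by
  induction R with
  | zero => simp
  | succ R ih =>
    have shift : ∑ ℓ ∈ range (R + 1), (ℓ + 1) * stirlingSecond R (ℓ + 1) * k.descFactorial (ℓ + 1)
        = ∑ ℓ ∈ range (R + 1), ℓ * stirlingSecond R ℓ * k.descFactorial ℓ := by
      have := sum_range_succ' (fun ℓ ↦ ℓ * stirlingSecond R ℓ * k.descFactorial ℓ) (R + 1)
      rw [sum_range_succ, stirlingSecond_eq_zero_of_lt (lt_succ_self R)] at this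
      simpa using this.symm
    calc ∑ ℓ ∈ range (R + 1 + 1), stirlingSecond (R + 1) ℓ * k.descFactorial ℓ
        = ∑ ℓ ∈ range (R + 1), ((ℓ + 1) * stirlingSecond R (ℓ + 1) * k.descFactorial (ℓ + 1)
            + stirlingSecond R ℓ * k.descFactorial (ℓ + 1)) := by
          simp only [sum_range_succ' _ (R + 1), stirlingSecond_succ_succ, stirlingSecond_succ_zero,
            zero_mul, add_zero, add_mul]
      _ = ∑ ℓ ∈ range (R + 1), stirlingSecond R ℓ * (k * k.descFactorial ℓ) := by
          rw [sum_add_distrib, shift, ← sum_add_distrib]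
          refine sum_congr rfl fun ℓ _ ↦ ?_
          rw [Nat.mul_descFactorial]
          ring
      _ = k ^ (R + 1) := by
          simp only [mul_left_comm _ k, ← mul_sum, ih, pow_succ']

theorem Nat.sum_choose_mul_stirlingSecond_mul_factorial (k R : ℕ) :
    ∑ ℓ ∈ range (k + 1), k.choose ℓ * stirlingSecond R ℓ * ℓ ! = k ^ R := by
  have descFactorial_form : ∀ ℓ, k.choose ℓ * stirlingSecond R ℓ * ℓ ! =
      stirlingSecond R ℓ * k.descFactorial ℓ := fun ℓ ↦ by
    rw [descFactorial_eq_factorial_mul_choose]; ring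
  simp only [descFactorial_form]
  calc ∑ ℓ ∈ range (k + 1), stirlingSecond R ℓ * k.descFactorial ℓ
      = ∑ ℓ ∈ range (k + R + 1), stirlingSecond R ℓ * k.descFactorial ℓ :=
        sum_subset (range_subset_range.mpr (by omega)) fun ℓ _ hℓ ↦ by
          simp [descFactorial_eq_zero_iff_lt.mpr (by simpa using hℓ : k < ℓ)]
    _ = ∑ ℓ ∈ range (R + 1), stirlingSecond R ℓ * k.descFactorial ℓ :=
        (sum_subset (range_subset_range.mpr (by omega)) fun ℓ _ hℓ ↦ by
          simp [stirlingSecond_eq_zero_of_lt (by simpa using hℓ : R < ℓ)]).symm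
    _ = k ^ R := sum_stirlingSecond_mul_descFactorial k R

theorem Nat.choose_sub_sub_le {n k ℓ : ℕ} (hℓk : ℓ ≤ k) (hkn : k ≤ n) :
    (n - ℓ).choose (k - ℓ) ≤ n.choose k := by
  refine Nat.le_of_mul_le_mul_left ?_ (choose_pos (hℓk.trans hkn))
  rw [← choose_mul hℓk, mul_comm]
  exact Nat.mul_le_mul_right _ (choose_le_choose ℓ hkn)

theorem sum_mul_logb_choose_sub_le {n k : ℕ} (hkn : k ≤ n) (R : ℕ) :
    ∑ ℓ ∈ Icc 1 (min k R),
        (k.choose ℓ * stirlingSecond R ℓ * ℓ ! : ℝ) * Real.logb 2 ((n - ℓ).choose (k - ℓ))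
      ≤ ((k : ℝ) ^ R - stirlingSecond R k * k !) * Real.logb 2 (n.choose k) := by
  set w : ℕ → ℝ := fun ℓ ↦ (k.choose ℓ * stirlingSecond R ℓ * ℓ ! : ℝ)
  have logb_nonneg (m : ℕ) : 0 ≤ Real.logb 2 m :=
    div_nonneg (Real.log_natCast_nonneg m) (Real.log_nonneg one_le_two)
  have sum_w : ∑ ℓ ∈ range k, w ℓ = k ^ R - stirlingSecond R k * k ! := by
    have := congrArg (Nat.cast : ℕ → ℝ) (sum_choose_mul_stirlingSecond_mul_factorial k R)
    push_cast [sum_range_succ, choose_self] at this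
    linarith
  calc ∑ ℓ ∈ Icc 1 (min k R), w ℓ * Real.logb 2 ((n - ℓ).choose (k - ℓ))
      ≤ ∑ ℓ ∈ range (k + 1), w ℓ * Real.logb 2 ((n - ℓ).choose (k - ℓ)) := by
        refine sum_le_sum_of_subset_of_nonneg (fun ℓ hℓ ↦ ?_) fun ℓ _ _ ↦ ?_
        · simp only [mem_Icc, mem_range] at hℓ ⊢
          omega
        · exact mul_nonneg (by positivity) (logb_nonneg _)
    _ = ∑ ℓ ∈ range k, w ℓ * Real.logb 2 ((n - ℓ).choose (k - ℓ)) := by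
        simp [sum_range_succ]
    _ ≤ ∑ ℓ ∈ range k, w ℓ * Real.logb 2 (n.choose k) := by
        refine sum_le_sum fun ℓ hℓ ↦ mul_le_mul_of_nonneg_left ?_ (by positivity)
        have hℓk : ℓ ≤ k := (mem_range.mp hℓ).le
        exact Real.logb_le_logb_of_le one_lt_two
          (by exact_mod_cast choose_pos (Nat.sub_le_sub_right hkn ℓ))
          (by exact_mod_cast choose_sub_sub_le hℓk hkn)
    _ = ((k : ℝ) ^ R - stirlingSecond R k * k !) * Real.logb 2 (n.choose k) := by
        rw [← sum_mul, sum_w]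

theorem stmt10_general (n k R : ℕ) (hk : 0 < k) (hkn : k < n) :
    Real.logb 2 (n.choose k) -
        ((k : ℝ) ^ R)⁻¹ *
          ∑ ℓ ∈ Finset.Icc 1 (min k R),
            (k.choose ℓ * stirling2 R ℓ * ℓ.factorial : ℝ) *
              Real.logb 2 (((n - ℓ).choose (k - ℓ) : ℝ))
      ≥ Real.logb 2 (n.choose k) * ((stirling2 R k : ℝ) * (k.factorial : ℝ) * ((k : ℝ) ^ R)⁻¹) := by
  rw [stirling2_eq_stirlingSecond_s10, ge_iff_le]
  have hkR : (k : ℝ) ^ R ≠ 0 := by positivity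
  calc Real.logb 2 (n.choose k) * ((stirlingSecond R k : ℝ) * k ! * ((k : ℝ) ^ R)⁻¹)
      = Real.logb 2 (n.choose k) - ((k : ℝ) ^ R)⁻¹ *
          (((k : ℝ) ^ R - stirlingSecond R k * k !) * Real.logb 2 (n.choose k)) := by
        field_simp
        ring
    _ ≤ _ := by gcongr; exact sum_mul_logb_choose_sub_le hkn.le R

/-- The capacity of the Coupon Collector Channel is at least that of its erasure version. -/
theorem stmt10 (n k R : ℕ) (hk : 0 < k) (hkn : k < n) (hR : 1 ≤ R) :
    Real.logb 2 (n.choose k) -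
        ((k : ℝ) ^ R)⁻¹ *
          ∑ ℓ ∈ Finset.Icc 1 (min k R),
            (k.choose ℓ * stirling2 R ℓ * ℓ.factorial : ℝ) *
              Real.logb 2 (((n - ℓ).choose (k - ℓ) : ℝ))
      ≥ Real.logb 2 (n.choose k) * ((stirling2 R k : ℝ) * (k.factorial : ℝ) * ((k : ℝ) ^ R)⁻¹) :=
  stmt10_general n k R hk hkn
end
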